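/- Let N_i = (G_i, c_i) be a flow network, let e1 be an input edge and e2 an output edge of G_i with c_i(e1) = c_i(e2) and head_{G_i}(e1) ≠ tail_{G_i}(e2), and let N_k be the network obtained by splicing e1 and e2 into a single new internal edge e (same vertex set; input edges Ein_i \ {e1}; output edges Eout_i \ {e2}; internal edges E#_i ∪ {e}, where tail(e) = tail_{G_i}(e2), head(e) = head_{G_i}(e1), c(e) = c_i(e1), and all other heads, tails, and capacities are inherited). Then for all A ⊆ Ein_i \ {e1} and B ⊆ Eout_i \ {e2}: maxFromTo_{N_k}(A, B) = maxFromTo_{N_i}(A, B) + min{ maxFromTo_{N_i}(A ∪ {e1}, B) − maxFromTo_{N_i}(A, B), maxFromTo_{N_i}(A, B ∪ {e2}) − maxFromTo_{N_i}(A, B) }. -/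

import Mathlib

/-! By max-flow min-cut, `maxFromTo N A B` is the least capacity of a cut, given by its source
side `S ⊆ V`. For each `S`, the spliced edge is cut in `Nk` exactly when `S` cuts both `e1` (as
an extra source edge) and `e2` (as an extra sink edge) in `Ni`; since the two halves have equal
capacity, the cut capacity of `S` in `Nk` is the smaller of its cut capacities in `Ni` for
`(A ∪ {e1}, B)` and for `(A, B ∪ {e2})`, and minimising over `S` commutes with this minimum.

Max-flow min-cut itself: a maximal flow exists by compactness, and the vertices reachable in its
residual graph from heads of unsaturated edges of `A` form a cut that it saturates, since
reaching the tail of an unsaturated edge of `B` would give a direction increasing the flow. -/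

open Finset

/-- Values of `tail` / `head` outside their intended domains (the tail of an input edge, the
head of an output edge) are irrelevant junk. -/
structure FlowNetwork (V E : Type) [Fintype V] [Fintype E]
    [DecidableEq V] [DecidableEq E] where
  Ein : Finset E
  Eout : Finset E
  Eint : Finset E
  disj_in_out : Disjoint Ein Eout
  disj_in_int : Disjoint Ein Eint
  disj_out_int : Disjoint Eout Eint
  tail : E → V
  head : E → V
  no_self_loop : ∀ e ∈ Eint, tail e ≠ head e
  no_multi : ∀ e ∈ Eint, ∀ e' ∈ Eint, tail e = tail e' → head e = head e' → e = e'
  cap : E → ℝ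
  cap_nonneg : ∀ e, 0 ≤ cap e

namespace FlowNetwork

variable {V E : Type} [Fintype V] [Fintype E] [DecidableEq V] [DecidableEq E]

def Feasible (N : FlowNetwork V E) (f : E → ℝ) : Prop :=
  (∀ e, 0 ≤ f e) ∧ (∀ e, f e ≤ N.cap e) ∧
  ∀ v : V,
    ∑ e ∈ (N.Ein ∪ N.Eint).filter (fun e => N.head e = v), f e =
    ∑ e ∈ (N.Eout ∪ N.Eint).filter (fun e => N.tail e = v), f e

noncomputable def maxFromTo (N : FlowNetwork V E) (A B : Finset E) : ℝ :=
  sSup {x : ℝ | ∃ f : E → ℝ, N.Feasible f ∧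
    (∀ e ∈ (N.Ein \ A) ∪ (N.Eout \ B), f e = 0) ∧ x = ∑ e ∈ A, f e}

end FlowNetwork

open Filter Topology

lemma exists_pos_forall_add_mul_mem_Icc {ι : Type*} [Finite ι] {l u x d : ι → ℝ}
    (hx : ∀ i, x i ∈ Set.Icc (l i) (u i)) (hup : ∀ i, 0 < d i → x i < u i)
    (hlow : ∀ i, d i < 0 → l i < x i) :
    ∃ ε > 0, ∀ i, x i + ε * d i ∈ Set.Icc (l i) (u i) := by
  have hev : ∀ i, ∀ᶠ ε in 𝓝[>] (0 : ℝ), x i + ε * d i ∈ Set.Icc (l i) (u i) := by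
    intro i
    have ht : Tendsto (fun ε => x i + ε * d i) (𝓝[>] 0) (𝓝 (x i)) := by
      have h := (show Continuous fun ε : ℝ => x i + ε * d i by fun_prop).tendsto 0
      simpa using h.mono_left nhdsWithin_le_nhds
    rcases lt_trichotomy (d i) 0 with hd | hd | hd
    · filter_upwards [self_mem_nhdsWithin, ht.eventually_const_lt (hlow i hd)] with ε hε hlt
      exact ⟨hlt.le, by nlinarith [(hx i).2, Set.mem_Ioi.mp hε]⟩
    · simp [hd, hx i]
    · filter_upwards [self_mem_nhdsWithin, ht.eventually_lt_const (hup i hd)] with ε hε hlt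
      exact ⟨by nlinarith [(hx i).1, Set.mem_Ioi.mp hε], hlt.le⟩
  obtain ⟨ε, hε, hεpos⟩ := ((Filter.eventually_all.2 hev).and self_mem_nhdsWithin).exists
  exact ⟨ε, hεpos, hε⟩

lemma Finset.sum_filter_union_of_eq_zero {ι M : Type*} [DecidableEq ι] [AddCommMonoid M]
    {X Y T : Finset ι} {f : ι → M} (hXY : Disjoint X Y) (hT : T ⊆ X) (hf : ∀ i ∈ X \ T, f i = 0)
    (p : ι → Prop) [DecidablePred p] :
    ∑ i ∈ (X ∪ Y).filter p, f i = ∑ i ∈ T.filter p, f i + ∑ i ∈ Y.filter p, f i := by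
  rw [filter_union, sum_union (disjoint_filter_filter hXY)]
  congr 1
  refine (sum_subset (filter_subset_filter p hT) fun i hi hiT => hf i ?_).symm
  exact mem_sdiff.2 ⟨(mem_filter.1 hi).1, fun h => hiT (mem_filter.2 ⟨h, (mem_filter.1 hi).2⟩)⟩

lemma isLeast_range_min {ι α : Type*} [LinearOrder α] {g h : ι → α} {a b : α}
    (hg : IsLeast (Set.range g) a) (hh : IsLeast (Set.range h) b) :
    IsLeast (Set.range fun i => min (g i) (h i)) (min a b) := by
  obtain ⟨⟨i, rfl⟩, hgi⟩ := hg
  obtain ⟨⟨j, rfl⟩, hhj⟩ := hh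
  refine ⟨?_, Set.forall_mem_range.2 fun k => min_le_min (hgi ⟨k, rfl⟩) (hhj ⟨k, rfl⟩)⟩
  rcases le_total (g i) (h j) with hij | hij
  · exact ⟨i, by rw [min_eq_left hij]; exact min_eq_left (hij.trans (hhj ⟨i, rfl⟩))⟩
  · exact ⟨j, by rw [min_eq_right hij]; exact min_eq_right (hij.trans (hgi ⟨j, rfl⟩))⟩

namespace FlowNetwork

variable {V E : Type} [Fintype V] [Fintype E] [DecidableEq V] [DecidableEq E]

variable (N : FlowNetwork V E)

def excess : (E → ℝ) →ₗ[ℝ] V → ℝ where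
  toFun f v := ∑ e ∈ (N.Ein ∪ N.Eint).filter (fun e => N.head e = v), f e -
    ∑ e ∈ (N.Eout ∪ N.Eint).filter (fun e => N.tail e = v), f e
  map_add' f g := by ext v; simp only [Pi.add_apply, sum_add_distrib]; ring
  map_smul' c f := by ext v; simp only [Pi.smul_apply, smul_eq_mul, ← mul_sum]; simp [mul_sub]

lemma excess_apply (f : E → ℝ) (v : V) :
    N.excess f v = ∑ e ∈ (N.Ein ∪ N.Eint).filter (fun e => N.head e = v), f e -
      ∑ e ∈ (N.Eout ∪ N.Eint).filter (fun e => N.tail e = v), f e := rfl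

lemma feasible_iff {f : E → ℝ} :
    N.Feasible f ↔ (∀ e, f e ∈ Set.Icc 0 (N.cap e)) ∧ N.excess f = 0 := by
  simp only [Feasible, Set.mem_Icc, forall_and, funext_iff, excess_apply, Pi.zero_apply,
    sub_eq_zero, and_assoc]

lemma sum_excess (f : E → ℝ) (S : Finset V) :
    ∑ v ∈ S, N.excess f v = ∑ e ∈ (N.Ein ∪ N.Eint).filter (fun e => N.head e ∈ S), f e -
      ∑ e ∈ (N.Eout ∪ N.Eint).filter (fun e => N.tail e ∈ S), f e := by
  simp only [excess_apply, sum_sub_distrib, sum_fiberwise_eq_sum_filter]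

lemma excess_single (e : E) (v : V) :
    N.excess (Pi.single e 1) v =
      (if e ∈ N.Ein ∪ N.Eint ∧ N.head e = v then 1 else 0) -
        (if e ∈ N.Eout ∪ N.Eint ∧ N.tail e = v then 1 else 0) := by
  simp [excess_apply]

lemma excess_single_of_mem_Ein {e : E} (he : e ∈ N.Ein) :
    N.excess (Pi.single e 1) = Pi.single (N.head e) 1 := by
  have hout : e ∉ N.Eout := disjoint_left.1 N.disj_in_out he
  have hint : e ∉ N.Eint := disjoint_left.1 N.disj_in_int he
  ext v; simp [excess_single, Pi.single_apply, eq_comm, he, hout, hint]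

lemma excess_single_of_mem_Eout {e : E} (he : e ∈ N.Eout) :
    N.excess (Pi.single e 1) = -Pi.single (N.tail e) 1 := by
  have hin : e ∉ N.Ein := disjoint_right.1 N.disj_in_out he
  have hint : e ∉ N.Eint := disjoint_left.1 N.disj_out_int he
  ext v; simp [excess_single, Pi.single_apply, eq_comm, he, hin, hint]

lemma excess_single_of_mem_Eint {e : E} (he : e ∈ N.Eint) :
    N.excess (Pi.single e 1) = Pi.single (N.head e) 1 - Pi.single (N.tail e) 1 := by
  ext v; simp [excess_single, Pi.single_apply, eq_comm, he]

def feasibleSet (A B : Finset E) : Set (E → ℝ) :=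
  {f | N.Feasible f ∧ ∀ e ∈ (N.Ein \ A) ∪ (N.Eout \ B), f e = 0}

lemma zero_mem_feasibleSet (A B : Finset E) : 0 ∈ N.feasibleSet A B :=
  ⟨(N.feasible_iff).2 ⟨fun e => ⟨le_rfl, N.cap_nonneg e⟩, map_zero _⟩, fun _ _ => rfl⟩

lemma isCompact_feasibleSet (A B : Finset E) : IsCompact (N.feasibleSet A B) := by
  have h : N.feasibleSet A B = (Set.univ.pi fun e => Set.Icc 0 (N.cap e)) ∩ N.excess ⁻¹' {0} ∩
      ⋂ e ∈ (N.Ein \ A) ∪ (N.Eout \ B), {f | f e = 0} := by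
    ext f
    simp only [feasibleSet, feasible_iff, Set.mem_ofPred_eq, Set.mem_inter_iff, Set.mem_pi,
      Set.mem_univ, true_implies, Set.mem_preimage, Set.mem_singleton_iff, Set.mem_iInter,
      and_assoc]
  rw [h, Set.inter_assoc]
  exact (isCompact_univ_pi fun e => isCompact_Icc).inter_right <|
    (isClosed_singleton.preimage (LinearMap.continuous_of_finiteDimensional _)).inter <|
      isClosed_biInter fun e _ => isClosed_eq (continuous_apply e) continuous_const

lemma maxFromTo_eq_sSup (A B : Finset E) :
    N.maxFromTo A B = sSup ((fun f => ∑ e ∈ A, f e) '' N.feasibleSet A B) := by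
  rw [maxFromTo]
  congr 1
  ext x
  exact ⟨fun ⟨f, h1, h2, hx⟩ => ⟨f, ⟨h1, h2⟩, hx.symm⟩,
    fun ⟨f, ⟨h1, h2⟩, hx⟩ => ⟨f, h1, h2, hx.symm⟩⟩

lemma maxFromTo_le {A B : Finset E} {c : ℝ} (h : ∀ f ∈ N.feasibleSet A B, ∑ e ∈ A, f e ≤ c) :
    N.maxFromTo A B ≤ c := by
  rw [maxFromTo_eq_sSup]
  exact csSup_le (Set.nonempty_of_mem (Set.mem_image_of_mem _ (N.zero_mem_feasibleSet A B)))
    (Set.forall_mem_image.2 h)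

lemma maxFromTo_eq_of_isMaxOn {A B : Finset E} {f : E → ℝ} (hf : f ∈ N.feasibleSet A B)
    (hmax : IsMaxOn (fun f => ∑ e ∈ A, f e) (N.feasibleSet A B) f) :
    N.maxFromTo A B = ∑ e ∈ A, f e := by
  rw [maxFromTo_eq_sSup]
  exact IsGreatest.csSup_eq ⟨Set.mem_image_of_mem _ hf, Set.forall_mem_image.2 hmax⟩

/-- The directions in which `f` can be pushed a little without leaving the capacity bounds. -/
def IsResidualDir (f g : E → ℝ) : Prop :=
  ∀ e, (0 < g e → f e < N.cap e) ∧ (g e < 0 → 0 < f e)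

variable {N} in
lemma IsResidualDir.add {f g h : E → ℝ} (hg : N.IsResidualDir f g) (hh : N.IsResidualDir f h) :
    N.IsResidualDir f (g + h) := by
  intro e
  constructor
  · intro hpos
    by_cases hge : 0 < g e
    · exact (hg e).1 hge
    · exact (hh e).1 (by simp only [Pi.add_apply] at hpos; linarith)
  · intro hneg
    by_cases hge : g e < 0
    · exact (hg e).2 hge
    · exact (hh e).2 (by simp only [Pi.add_apply] at hneg; linarith)

lemma isResidualDir_single {f : E → ℝ} {e : E} (h : f e < N.cap e) :
    N.IsResidualDir f (Pi.single e 1) := by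
  intro e'
  rcases eq_or_ne e' e with rfl | hne <;> simp [*]

lemma isResidualDir_neg_single {f : E → ℝ} {e : E} (h : 0 < f e) :
    N.IsResidualDir f (-Pi.single e 1) := by
  intro e'
  rcases eq_or_ne e' e with rfl | hne <;> simp [*]

lemma exists_pos_add_smul_mem_feasibleSet {A B : Finset E} {f g : E → ℝ}
    (hf : f ∈ N.feasibleSet A B) (hg : N.IsResidualDir f g) (hgex : N.excess g = 0)
    (hg0 : ∀ e ∈ (N.Ein \ A) ∪ (N.Eout \ B), g e = 0) :
    ∃ ε > (0 : ℝ), f + ε • g ∈ N.feasibleSet A B := by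
  obtain ⟨hbox, hfex⟩ := (N.feasible_iff).1 hf.1
  obtain ⟨ε, hε, hεbox⟩ := exists_pos_forall_add_mul_mem_Icc hbox (fun e => (hg e).1)
    (fun e => (hg e).2)
  refine ⟨ε, hε, (N.feasible_iff).2 ⟨hεbox, ?_⟩, fun e he => ?_⟩
  · rw [map_add, map_smul, hfex, hgex, smul_zero, add_zero]
  · simp [hf.2 e he, hg0 e he]

def Residual (f : E → ℝ) (v w : V) : Prop :=
  ∃ e ∈ N.Eint, (N.tail e = v ∧ N.head e = w ∧ f e < N.cap e) ∨
    (N.tail e = w ∧ N.head e = v ∧ 0 < f e)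

lemma exists_isResidualDir_of_reflTransGen {f : E → ℝ} {u v : V}
    (h : Relation.ReflTransGen (N.Residual f) u v) :
    ∃ g, N.IsResidualDir f g ∧ (∀ e ∉ N.Eint, g e = 0) ∧
      N.excess g = Pi.single v 1 - Pi.single u 1 := by
  induction h with
  | refl => exact ⟨0, fun e => by simp, fun e _ => rfl, by simp⟩
  | tail _ hstep ih =>
    obtain ⟨g, hg, hsupp, hex⟩ := ih
    obtain ⟨e, he, ⟨rfl, rfl, hlt⟩ | ⟨rfl, rfl, hpos⟩⟩ := hstep
    · refine ⟨g + Pi.single e 1, hg.add (N.isResidualDir_single hlt), fun e' he' => ?_, ?_⟩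
      · simp [hsupp e' he', ne_of_mem_of_not_mem he he' |>.symm]
      · rw [map_add, hex, N.excess_single_of_mem_Eint he]; abel
    · refine ⟨g + -Pi.single e 1, hg.add (N.isResidualDir_neg_single hpos), fun e' he' => ?_, ?_⟩
      · simp [hsupp e' he', ne_of_mem_of_not_mem he he' |>.symm]
      · rw [map_add, map_neg, hex, N.excess_single_of_mem_Eint he]; abel

/-- `S` is the source side of the cut: an edge of `A` is cut when its head lies outside `S`,
an edge of `B` when its tail lies in `S`. -/
def cutFlow (A B : Finset E) (S : Finset V) (f : E → ℝ) : ℝ :=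
  ∑ e ∈ A.filter (fun e => N.head e ∉ S), f e + ∑ e ∈ B.filter (fun e => N.tail e ∈ S), f e +
    ∑ e ∈ N.Eint.filter (fun e => N.tail e ∈ S ∧ N.head e ∉ S), f e

def backFlow (S : Finset V) (f : E → ℝ) : ℝ :=
  ∑ e ∈ N.Eint.filter (fun e => N.head e ∈ S ∧ N.tail e ∉ S), f e

def cutCapacity (A B : Finset E) (S : Finset V) : ℝ :=
  N.cutFlow A B S N.cap

lemma cutFlow_mono (A B : Finset E) (S : Finset V) {f g : E → ℝ} (h : f ≤ g) :
    N.cutFlow A B S f ≤ N.cutFlow A B S g := by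
  unfold cutFlow
  gcongr with e _ e _ e _ <;> exact h e

lemma sum_eq_cutFlow_sub_backFlow {A B : Finset E} (hA : A ⊆ N.Ein) (hB : B ⊆ N.Eout)
    {f : E → ℝ} (hf : f ∈ N.feasibleSet A B) (S : Finset V) :
    ∑ e ∈ A, f e = N.cutFlow A B S f - N.backFlow S f := by
  have hcons : ∑ v ∈ S, N.excess f v = 0 := by simp [((N.feasible_iff).1 hf.1).2]
  rw [sum_excess,
    sum_filter_union_of_eq_zero N.disj_in_int hA fun e he => hf.2 e (mem_union_left _ he),
    sum_filter_union_of_eq_zero N.disj_out_int hB fun e he => hf.2 e (mem_union_right _ he)]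
    at hcons
  have hint : ∑ e ∈ N.Eint.filter (fun e => N.head e ∈ S), f e -
      ∑ e ∈ N.Eint.filter (fun e => N.tail e ∈ S), f e =
      N.backFlow S f - ∑ e ∈ N.Eint.filter (fun e => N.tail e ∈ S ∧ N.head e ∉ S), f e := by
    simp only [backFlow, sum_filter, ← sum_sub_distrib]
    refine sum_congr rfl fun e _ => ?_
    split_ifs <;> simp_all
  rw [← sum_filter_add_sum_filter_not A (fun e => N.head e ∈ S)]
  unfold cutFlow
  linarith

lemma maxFromTo_le_cutCapacity {A B : Finset E} (hA : A ⊆ N.Ein) (hB : B ⊆ N.Eout)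
    (S : Finset V) : N.maxFromTo A B ≤ N.cutCapacity A B S := by
  refine N.maxFromTo_le fun f hf => ?_
  have hbox := ((N.feasible_iff).1 hf.1).1
  have hback : 0 ≤ N.backFlow S f := sum_nonneg fun e _ => (hbox e).1
  have hcut := N.cutFlow_mono A B S fun e => (hbox e).2
  rw [N.sum_eq_cutFlow_sub_backFlow hA hB hf S, cutCapacity]
  linarith

lemma exists_isMaxOn_feasibleSet (A B : Finset E) :
    ∃ f ∈ N.feasibleSet A B, IsMaxOn (fun f => ∑ e ∈ A, f e) (N.feasibleSet A B) f :=
  (N.isCompact_feasibleSet A B).exists_isMaxOn ⟨0, N.zero_mem_feasibleSet A B⟩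
    (continuous_finsetSum A fun e _ => continuous_apply e).continuousOn

lemma not_reflTransGen_residual_of_isMaxOn {A B : Finset E} (hA : A ⊆ N.Ein)
    (hB : B ⊆ N.Eout) {f : E → ℝ} (hf : f ∈ N.feasibleSet A B)
    (hmax : IsMaxOn (fun f => ∑ e ∈ A, f e) (N.feasibleSet A B) f) {a b : E} (ha : a ∈ A)
    (hfa : f a < N.cap a) (hb : b ∈ B) (hfb : f b < N.cap b) :
    ¬ Relation.ReflTransGen (N.Residual f) (N.head a) (N.tail b) := by
  intro hpath
  obtain ⟨g, hg, hsupp, hgex⟩ := N.exists_isResidualDir_of_reflTransGen hpath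
  have hbA : b ∉ A := fun h => disjoint_left.1 N.disj_in_out (hA h) (hB hb)
  set d := Pi.single a 1 + g + Pi.single b 1 with hd_def
  have hd : N.IsResidualDir f d :=
    ((N.isResidualDir_single hfa).add hg).add (N.isResidualDir_single hfb)
  have hdex : N.excess d = 0 := by
    rw [hd_def, map_add, map_add, hgex, N.excess_single_of_mem_Ein (hA ha),
      N.excess_single_of_mem_Eout (hB hb)]
    abel
  have hd0 : ∀ e ∈ (N.Ein \ A) ∪ (N.Eout \ B), d e = 0 := by
    intro e he
    rcases mem_union.1 he with h | h <;> obtain ⟨hmem, hnot⟩ := mem_sdiff.1 h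
    · have hea : e ≠ a := by rintro rfl; exact hnot ha
      have heb : e ≠ b := by rintro rfl; exact disjoint_left.1 N.disj_in_out hmem (hB hb)
      simp [d, hea, heb, hsupp e (disjoint_left.1 N.disj_in_int hmem)]
    · have hea : e ≠ a := by rintro rfl; exact disjoint_left.1 N.disj_in_out (hA ha) hmem
      have heb : e ≠ b := by rintro rfl; exact hnot hb
      simp [d, hea, heb, hsupp e (disjoint_left.1 N.disj_out_int hmem)]
  have hdA : ∑ e ∈ A, d e = 1 := by
    have hgA : ∑ e ∈ A, g e = 0 :=
      sum_eq_zero fun e he => hsupp e (disjoint_left.1 N.disj_in_int (hA he))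
    simp [d, sum_add_distrib, ha, hbA, hgA]
  obtain ⟨ε, hε, hmem⟩ := N.exists_pos_add_smul_mem_feasibleSet hf hd hdex hd0
  have hle := isMaxOn_iff.1 hmax _ hmem
  simp only [Pi.add_apply, Pi.smul_apply, smul_eq_mul, sum_add_distrib, ← mul_sum, hdA] at hle
  linarith

noncomputable def residualReach (A : Finset E) (f : E → ℝ) : Finset V := by
  classical exact univ.filter fun v => ∃ a ∈ A, f a < N.cap a ∧
    Relation.ReflTransGen (N.Residual f) (N.head a) v

variable {N} in
lemma mem_residualReach {A : Finset E} {f : E → ℝ} {v : V} :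
    v ∈ N.residualReach A f ↔
      ∃ a ∈ A, f a < N.cap a ∧ Relation.ReflTransGen (N.Residual f) (N.head a) v := by
  simp [residualReach]

lemma mem_residualReach_of_residual {A : Finset E} {f : E → ℝ} {v w : V}
    (hv : v ∈ N.residualReach A f) (hvw : N.Residual f v w) : w ∈ N.residualReach A f :=
  let ⟨a, ha, hfa, hpath⟩ := mem_residualReach.1 hv
  mem_residualReach.2 ⟨a, ha, hfa, hpath.tail hvw⟩

lemma backFlow_residualReach {A : Finset E} {f : E → ℝ} (hf : ∀ e, 0 ≤ f e) :
    N.backFlow (N.residualReach A f) f = 0 := by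
  refine sum_eq_zero fun e he => ?_
  obtain ⟨he, hhead, htail⟩ := mem_filter.1 he
  by_contra hne
  exact htail (N.mem_residualReach_of_residual hhead
    ⟨e, he, Or.inr ⟨rfl, rfl, lt_of_le_of_ne (hf e) (Ne.symm hne)⟩⟩)

lemma cutFlow_residualReach {A B : Finset E} (hA : A ⊆ N.Ein) (hB : B ⊆ N.Eout) {f : E → ℝ}
    (hf : f ∈ N.feasibleSet A B) (hmax : IsMaxOn (fun f => ∑ e ∈ A, f e) (N.feasibleSet A B) f) :
    N.cutFlow A B (N.residualReach A f) f = N.cutCapacity A B (N.residualReach A f) := by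
  have hcap := fun e => (((N.feasible_iff).1 hf.1).1 e).2
  refine congr_arg₂ (· + ·) (congr_arg₂ (· + ·) (sum_congr rfl ?_) (sum_congr rfl ?_))
    (sum_congr rfl ?_) <;> intro e he <;> rw [mem_filter] at he <;> by_contra hne
  · exact he.2 (mem_residualReach.2 ⟨e, he.1, lt_of_le_of_ne (hcap e) hne, .refl⟩)
  · obtain ⟨a, ha, hfa, hpath⟩ := mem_residualReach.1 he.2
    exact N.not_reflTransGen_residual_of_isMaxOn hA hB hf hmax ha hfa he.1
      (lt_of_le_of_ne (hcap e) hne) hpath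
  · exact he.2.2 (N.mem_residualReach_of_residual he.2.1
      ⟨e, he.1, Or.inl ⟨rfl, rfl, lt_of_le_of_ne (hcap e) hne⟩⟩)

theorem exists_cutCapacity_eq_maxFromTo {A B : Finset E} (hA : A ⊆ N.Ein) (hB : B ⊆ N.Eout) :
    ∃ S, N.cutCapacity A B S = N.maxFromTo A B := by
  obtain ⟨f, hf, hmax⟩ := N.exists_isMaxOn_feasibleSet A B
  refine ⟨N.residualReach A f, ?_⟩
  rw [N.maxFromTo_eq_of_isMaxOn hf hmax, N.sum_eq_cutFlow_sub_backFlow hA hB hf,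
    N.cutFlow_residualReach hA hB hf hmax,
    N.backFlow_residualReach fun e => (((N.feasible_iff).1 hf.1).1 e).1, sub_zero]

lemma isLeast_cutCapacity {A B : Finset E} (hA : A ⊆ N.Ein) (hB : B ⊆ N.Eout) :
    IsLeast (Set.range (N.cutCapacity A B)) (N.maxFromTo A B) :=
  ⟨N.exists_cutCapacity_eq_maxFromTo hA hB,
    Set.forall_mem_range.2 (N.maxFromTo_le_cutCapacity hA hB)⟩

lemma cutCapacity_insert_left {A : Finset E} {e : E} (he : e ∉ A) (B : Finset E) (S : Finset V) :
    N.cutCapacity (insert e A) B S =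
      N.cutCapacity A B S + if N.head e ∈ S then 0 else N.cap e := by
  unfold cutCapacity cutFlow
  rw [filter_insert]
  by_cases hS : N.head e ∈ S
  · simp [hS]
  · rw [if_pos hS, sum_insert fun hm => he (mem_filter.1 hm).1, if_neg hS]
    ring

lemma cutCapacity_insert_right (A : Finset E) {B : Finset E} {e : E} (he : e ∉ B)
    (S : Finset V) :
    N.cutCapacity A (insert e B) S =
      N.cutCapacity A B S + if N.tail e ∈ S then N.cap e else 0 := by
  unfold cutCapacity cutFlow
  rw [filter_insert]
  by_cases hS : N.tail e ∈ S
  · rw [if_pos hS, sum_insert fun hm => he (mem_filter.1 hm).1, if_pos hS]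
    ring
  · simp [hS]

/-- `Nk` arises from `Ni` by splicing the input edge `e1` and the output edge `e2` into one
internal edge, which keeps the name `e1`. -/
structure IsSplice (Ni Nk : FlowNetwork V E) (e1 e2 : E) : Prop where
  Ein_eq : Nk.Ein = Ni.Ein.erase e1
  Eout_eq : Nk.Eout = Ni.Eout.erase e2
  Eint_eq : Nk.Eint = insert e1 Ni.Eint
  head_eq : ∀ e, Nk.head e = Ni.head e
  tail_eq : ∀ e, e ≠ e1 → Nk.tail e = Ni.tail e
  tail_splice : Nk.tail e1 = Ni.tail e2
  cap_eq : ∀ e, Nk.cap e = Ni.cap e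

namespace IsSplice

variable {Ni Nk : FlowNetwork V E} {e1 e2 : E}

lemma cutCapacity_eq (h : IsSplice Ni Nk e1 e2) (he1 : e1 ∈ Ni.Ein) {A B : Finset E}
    (hB : B ⊆ Ni.Eout) (S : Finset V) :
    Nk.cutCapacity A B S =
      Ni.cutCapacity A B S + if Ni.tail e2 ∈ S ∧ Ni.head e1 ∉ S then Ni.cap e1 else 0 := by
  have hint1 : e1 ∉ Ni.Eint := disjoint_left.1 Ni.disj_in_int he1
  have hBtail : B.filter (fun e => Nk.tail e ∈ S) = B.filter (fun e => Ni.tail e ∈ S) :=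
    filter_congr fun e he => by
      rw [h.tail_eq e (ne_of_mem_of_not_mem (hB he) (disjoint_left.1 Ni.disj_in_out he1))]
  have hinttail : Ni.Eint.filter (fun e => Nk.tail e ∈ S ∧ Ni.head e ∉ S) =
      Ni.Eint.filter (fun e => Ni.tail e ∈ S ∧ Ni.head e ∉ S) :=
    filter_congr fun e he => by rw [h.tail_eq e (ne_of_mem_of_not_mem he hint1)]
  unfold cutCapacity cutFlow
  simp only [h.Eint_eq, h.head_eq, h.cap_eq, filter_insert, h.tail_splice, hBtail, hinttail]
  split_ifs
  · rw [sum_insert fun hm => hint1 (mem_filter.1 hm).1]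
    ring
  · ring

lemma cutCapacity_eq_min (h : IsSplice Ni Nk e1 e2) (he1 : e1 ∈ Ni.Ein)
    (hcap : Ni.cap e1 = Ni.cap e2) {A B : Finset E} (hA1 : e1 ∉ A) (hB2 : e2 ∉ B)
    (hB : B ⊆ Ni.Eout) (S : Finset V) :
    Nk.cutCapacity A B S =
      min (Ni.cutCapacity (insert e1 A) B S) (Ni.cutCapacity A (insert e2 B) S) := by
  rw [h.cutCapacity_eq he1 hB, Ni.cutCapacity_insert_left hA1, Ni.cutCapacity_insert_right _ hB2,
    min_add_add_left, ← hcap]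
  have := Ni.cap_nonneg e1
  split_ifs <;> simp_all

theorem maxFromTo_eq (h : IsSplice Ni Nk e1 e2) (he1 : e1 ∈ Ni.Ein) (he2 : e2 ∈ Ni.Eout)
    (hcap : Ni.cap e1 = Ni.cap e2) {A B : Finset E} (hA : A ⊆ Ni.Ein.erase e1)
    (hB : B ⊆ Ni.Eout.erase e2) :
    Nk.maxFromTo A B = min (Ni.maxFromTo (insert e1 A) B) (Ni.maxFromTo A (insert e2 B)) := by
  have hAi : A ⊆ Ni.Ein := hA.trans (erase_subset _ _)
  have hBi : B ⊆ Ni.Eout := hB.trans (erase_subset _ _)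
  have hA1 : e1 ∉ A := fun h1 => (mem_erase.1 (hA h1)).1 rfl
  have hB2 : e2 ∉ B := fun h2 => (mem_erase.1 (hB h2)).1 rfl
  have hk := Nk.isLeast_cutCapacity (h.Ein_eq ▸ hA) (h.Eout_eq ▸ hB)
  rw [funext (h.cutCapacity_eq_min he1 hcap hA1 hB2 hBi)] at hk
  exact hk.unique <| isLeast_range_min (Ni.isLeast_cutCapacity (insert_subset he1 hAi) hBi)
    (Ni.isLeast_cutCapacity hAi (insert_subset he2 hBi))

end IsSplice

theorem stmt13_general (Ni : FlowNetwork V E)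
    (e1 e2 : E) (he1 : e1 ∈ Ni.Ein) (he2 : e2 ∈ Ni.Eout)
    (hcap12 : Ni.cap e1 = Ni.cap e2)
    (Nk : FlowNetwork V E)
    (hEin : Nk.Ein = Ni.Ein.erase e1)
    (hEout : Nk.Eout = Ni.Eout.erase e2)
    (hEint : Nk.Eint = insert e1 Ni.Eint)
    (hhead : ∀ e : E, Nk.head e = Ni.head e)
    (htail : ∀ e : E, e ≠ e1 → Nk.tail e = Ni.tail e)
    (hsplice : Nk.tail e1 = Ni.tail e2)
    (hcap : ∀ e : E, Nk.cap e = Ni.cap e)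
    (A B : Finset E) (hA : A ⊆ Ni.Ein.erase e1) (hB : B ⊆ Ni.Eout.erase e2) :
    Nk.maxFromTo A B =
      Ni.maxFromTo A B +
        min (Ni.maxFromTo (insert e1 A) B - Ni.maxFromTo A B)
            (Ni.maxFromTo A (insert e2 B) - Ni.maxFromTo A B) := by
  rw [IsSplice.maxFromTo_eq ⟨hEin, hEout, hEint, hhead, htail, hsplice, hcap⟩ he1 he2 hcap12 hA hB,
    min_sub_sub_right, add_sub_cancel]

/-- splicing within one network, Case 2 of the induction:
`Nk` is obtained from `Ni` by splicing its input edge `e1` and its output edge `e2`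
into a single internal edge `e` (encoded as the edge `e1` itself, with
`tail e = tail_{Ni} e2` and `head e = head_{Ni} e1`; the leftover half `e2` is junk,
belonging to none of the three edge classes of `Nk`).
Then `maxFromTo` of the spliced network is given by the stated formula. -/
theorem stmt13 (Ni : FlowNetwork V E)
    (hcoveri : Ni.Ein ∪ Ni.Eout ∪ Ni.Eint = Finset.univ)
    (e1 e2 : E) (he1 : e1 ∈ Ni.Ein) (he2 : e2 ∈ Ni.Eout)
    (hcap12 : Ni.cap e1 = Ni.cap e2) (hne : Ni.head e1 ≠ Ni.tail e2)
    (Nk : FlowNetwork V E)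
    (hEin : Nk.Ein = Ni.Ein.erase e1)
    (hEout : Nk.Eout = Ni.Eout.erase e2)
    (hEint : Nk.Eint = insert e1 Ni.Eint)
    (hhead : ∀ e : E, Nk.head e = Ni.head e)
    (htail : ∀ e : E, e ≠ e1 → Nk.tail e = Ni.tail e)
    (hsplice : Nk.tail e1 = Ni.tail e2)
    (hcap : ∀ e : E, Nk.cap e = Ni.cap e)
    (A B : Finset E) (hA : A ⊆ Ni.Ein.erase e1) (hB : B ⊆ Ni.Eout.erase e2) :
    Nk.maxFromTo A B =
      Ni.maxFromTo A B +
        min (Ni.maxFromTo (insert e1 A) B - Ni.maxFromTo A B)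
            (Ni.maxFromTo A (insert e2 B) - Ni.maxFromTo A B) :=
  stmt13_general Ni e1 e2 he1 he2 hcap12 Nk hEin hEout hEint hhead htail hsplice hcap A B hA hB

end FlowNetwork
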